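/- arXiv:1708.08490 — 3 statements merged into one kernel-verified Lean document; each statement's English description precedes it below -/
import Mathlib

section
/- Let P ∈ (0,2] and h_P(x) = (P/2)(x^2-1)+1. For every nonnegative function h ∈ H^1((-1,1)) with h(-1) = h(1) = 1, the energy E(h) = (1/2)∫_{-1}^{1} |h'(x)|^2 dx + P ∫_{-1}^{1} h(x) dx satisfies E(h) ≥ E(h_P), with equality if and only if h = h_P. -/
/-! The gap `E(h) - E(h_P)` equals `½ ∫ (h' - h_P')²`: expanding the square, the cross term
`∫ h' · P x` integrates by parts to boundary values minus `P ∫ h`, and the boundary values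
of `h` and `h_P` agree. Hence `E(h) ≥ E(h_P)`, with equality iff `h' = h_P'` almost
everywhere, i.e. iff `h - h_P` is constant, hence zero. -/

open MeasureTheory

section

open Set intervalIntegral

variable {f f' : ℝ → ℝ} {a b : ℝ}

theorem intervalIntegrable_deriv_of_intervalIntegrable_sq (hab : a ≤ b)
    (hf : ∀ x ∈ Ioo a b, HasDerivAt f (f' x) x)
    (hsq : IntervalIntegrable (fun x => f' x ^ 2) volume a b) :
    IntervalIntegrable f' volume a b := by
  rw [intervalIntegrable_iff_integrableOn_Ioo_of_le hab] at hsq ⊢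
  have hmeas : AEStronglyMeasurable f' (volume.restrict (Ioo a b)) :=
    (aestronglyMeasurable_deriv f _).congr
      (ae_restrict_of_forall_mem measurableSet_Ioo fun x hx => (hf x hx).deriv)
  exact ((memLp_two_iff_integrable_sq hmeas).2 hsq).integrable one_le_two

theorem hasDerivAt_of_hasDerivWithinAt_Icc
    (hf : ∀ x ∈ Icc a b, HasDerivWithinAt f (f' x) (Icc a b) x) :
    ∀ x ∈ Ioo a b, HasDerivAt f (f' x) x := fun x hx =>
  (hf x (Ioo_subset_Icc_self hx)).hasDerivAt (Icc_mem_nhds hx.1 hx.2)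

theorem integral_sq_deriv_sub_const_mul_id (hab : a ≤ b)
    (hf : ∀ x ∈ Icc a b, HasDerivWithinAt f (f' x) (Icc a b) x)
    (hsq : IntervalIntegrable (fun x => f' x ^ 2) volume a b) (c : ℝ) :
    ∫ x in a..b, (f' x - c * x) ^ 2 =
      (∫ x in a..b, f' x ^ 2) - 2 * c * (b * f b - a * f a - ∫ x in a..b, f x)
        + c ^ 2 * ((b ^ 3 - a ^ 3) / 3) := by
  have hf' := intervalIntegrable_deriv_of_intervalIntegrable_sq hab
    (hasDerivAt_of_hasDerivWithinAt_Icc hf) hsq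
  rw [← uIcc_of_le hab] at hf
  have hid : ∀ x ∈ uIcc a b, HasDerivWithinAt id 1 (uIcc a b) x :=
    fun x _ => hasDerivWithinAt_id x _
  have hparts :=
    integral_mul_deriv_eq_deriv_mul_of_hasDerivWithinAt hid hf intervalIntegrable_const hf'
  have hxf' : IntervalIntegrable (fun x => x * f' x) volume a b :=
    hf'.continuousOn_mul continuousOn_id
  have hx2 : IntervalIntegrable (fun x : ℝ => c ^ 2 * x ^ 2) volume a b :=
    (continuous_const.mul (continuous_pow 2)).intervalIntegrable _ _
  calc ∫ x in a..b, (f' x - c * x) ^ 2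
      = ∫ x in a..b, (f' x ^ 2 - 2 * c * (x * f' x) + c ^ 2 * x ^ 2) := by
        congr 1; ext x; ring
    _ = _ := by
      rw [integral_add (hsq.sub (hxf'.const_mul _)) hx2, integral_sub hsq (hxf'.const_mul _),
        intervalIntegral.integral_const_mul, intervalIntegral.integral_const_mul, integral_pow]
      simp only [id, one_mul] at hparts
      rw [hparts]; ring

theorem IntervalIntegrable.sq_sub_of_continuous {g : ℝ → ℝ}
    (hf : IntervalIntegrable f volume a b)
    (hsq : IntervalIntegrable (fun x => f x ^ 2) volume a b) (hg : Continuous g) :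
    IntervalIntegrable (fun x => (f x - g x) ^ 2) volume a b := by
  have hexp : (fun x => (f x - g x) ^ 2) = fun x => f x ^ 2 - 2 * (g x * f x) + g x ^ 2 := by
    ext x; ring
  rw [hexp]
  exact (hsq.sub ((hf.continuousOn_mul hg.continuousOn).const_mul 2)).add
    ((hg.pow 2).intervalIntegrable _ _)

theorem integral_sq_deriv_eq_zero_iff_eqOn (hab : a < b)
    (hf : ∀ x ∈ Icc a b, HasDerivWithinAt f (f' x) (Icc a b) x)
    (hsq : IntervalIntegrable (fun x => f' x ^ 2) volume a b) :
    ∫ x in a..b, f' x ^ 2 = 0 ↔ EqOn f (fun _ => f a) (Icc a b) := by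
  constructor
  · intro h0 x hx
    have hae : f' =ᵐ[volume.restrict (Ioc a b)] 0 := by
      filter_upwards [(integral_eq_zero_iff_of_le_of_nonneg_ae hab.le
        (ae_of_all _ fun x => sq_nonneg (f' x)) hsq).1 h0] with x hx
      exact pow_eq_zero_iff two_ne_zero |>.1 hx
    have hsub : Icc a x ⊆ Icc a b := Icc_subset_Icc_right hx.2
    have hftc : ∫ y in a..x, f' y = f x - f a :=
      integral_eq_sub_of_hasDerivAt_of_le hx.1
        (fun y hy => (hf y (hsub hy)).continuousWithinAt.mono hsub)
        (fun y hy => hasDerivAt_of_hasDerivWithinAt_Icc hf y ⟨hy.1, hy.2.trans_le hx.2⟩)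
        ((intervalIntegrable_deriv_of_intervalIntegrable_sq hab.le
          (hasDerivAt_of_hasDerivWithinAt_Icc hf) hsq).mono_set (by
            rw [uIcc_of_le hx.1, uIcc_of_le hab.le]; exact hsub))
    have hzero : ∫ y in a..x, f' y = 0 := by
      rw [integral_of_le hx.1, integral_congr_ae
        (ae_restrict_of_ae_restrict_of_subset (Ioc_subset_Ioc_right hx.2) hae)]
      simp
    show f x = f a
    linarith
  · intro hconst
    have hderiv_zero : ∀ x ∈ Icc a b, f' x = 0 := fun x hx =>
      (uniqueDiffOn_Icc hab x hx).eq_deriv _ (hf x hx)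
        ((hasDerivWithinAt_const x _ (f a)).congr_of_mem hconst hx)
    rw [integral_congr (g := fun _ => 0) fun x hx => by
      simp [hderiv_zero x (by rwa [uIcc_of_le hab.le] at hx)]]
    simp

end

theorem stmt3_general (P : ℝ) (h h' : ℝ → ℝ)
    (hderiv : ∀ x ∈ Set.Icc (-1:ℝ) 1, HasDerivWithinAt h (h' x) (Set.Icc (-1) 1) x)
    (hint : IntervalIntegrable (fun x => (h' x)^2) volume (-1) 1)
    (hbcm : h (-1) = 1) (hbcp : h 1 = 1) :
    let hp : ℝ → ℝ := fun x => P/2 * (x^2 - 1) + 1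
    let Eh : ℝ := (1/2) * (∫ x in (-1:ℝ)..1, (h' x)^2) + P * (∫ x in (-1:ℝ)..1, h x)
    let Ep : ℝ := (1/2) * (∫ x in (-1:ℝ)..1, (deriv hp x)^2) + P * (∫ x in (-1:ℝ)..1, hp x)
    Ep ≤ Eh ∧ (Eh = Ep ↔ Set.EqOn h hp (Set.Icc (-1) 1)) := by
  intro hp Eh Ep
  have hhp : ∀ x, HasDerivAt hp (P * x) x := fun x =>
    (((hasDerivAt_pow 2 x).sub_const 1).const_mul (P / 2) |>.add_const 1).congr_deriv (by ring)
  have hEp : Ep = 2 * P - P ^ 2 / 3 := by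
    have hint_hp : ∫ x in (-1:ℝ)..1, hp x = 2 - 2 * P / 3 := by
      rw [intervalIntegral.integral_add (Continuous.intervalIntegrable (by fun_prop) _ _) (by simp),
        intervalIntegral.integral_const_mul,
        intervalIntegral.integral_sub (Continuous.intervalIntegrable (by fun_prop) _ _) (by simp)]
      norm_num [integral_pow]
      ring
    simp only [Ep, (hhp _).deriv, hint_hp, mul_pow, intervalIntegral.integral_const_mul,
      integral_pow]
    norm_num
    ring
  have hgap : Eh - Ep = (1 / 2) * ∫ x in (-1:ℝ)..1, (h' x - P * x) ^ 2 := by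
    rw [integral_sq_deriv_sub_const_mul_id (by norm_num) hderiv hint, hbcm, hbcp, hEp]
    ring
  have hgap_nonneg : 0 ≤ ∫ x in (-1:ℝ)..1, (h' x - P * x) ^ 2 :=
    intervalIntegral.integral_nonneg (by norm_num) fun x _ => sq_nonneg _
  refine ⟨by linarith, ?_⟩
  have hgap_int := (intervalIntegrable_deriv_of_intervalIntegrable_sq (by norm_num)
    (hasDerivAt_of_hasDerivWithinAt_Icc hderiv) hint).sq_sub_of_continuous hint
    (continuous_const_mul P)
  rw [← sub_eq_zero, hgap, mul_eq_zero, or_iff_right (by norm_num),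
    integral_sq_deriv_eq_zero_iff_eqOn (by norm_num)
      (fun x hx => (hderiv x hx).sub (hhp x).hasDerivWithinAt) hgap_int]
  simp [Set.EqOn, hbcm, hp, sub_eq_zero]

theorem stmt3 (P : ℝ) (hP0 : 0 < P) (hP2 : P ≤ 2) (h h' : ℝ → ℝ)
    (hcont : ContinuousOn h (Set.Icc (-1) 1))
    (hderiv : ∀ x ∈ Set.Icc (-1:ℝ) 1, HasDerivWithinAt h (h' x) (Set.Icc (-1) 1) x)
    (hint : IntervalIntegrable (fun x => (h' x)^2) volume (-1) 1)
    (hnn : ∀ x ∈ Set.Icc (-1:ℝ) 1, 0 ≤ h x)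
    (hbcm : h (-1) = 1) (hbcp : h 1 = 1) :
    let hp : ℝ → ℝ := fun x => P/2 * (x^2 - 1) + 1
    let Eh : ℝ := (1/2) * (∫ x in (-1:ℝ)..1, (h' x)^2) + P * (∫ x in (-1:ℝ)..1, h x)
    let Ep : ℝ := (1/2) * (∫ x in (-1:ℝ)..1, (deriv hp x)^2) + P * (∫ x in (-1:ℝ)..1, hp x)
    Ep ≤ Eh ∧ (Eh = Ep ↔ Set.EqOn h hp (Set.Icc (-1) 1)) :=
  stmt3_general P h h' hderiv hint hbcm hbcp
end

section
/- Let P > 2, x_P = 1 - sqrt(2/P), and h_P the steady state equal to (P/2)(|x|-x_P)^2 for x_P ≤ |x| ≤ 1 and 0 for |x| < x_P. For every nonnegative h ∈ H^1((-1,1)) with h(±1) = 1, the energy E(h) = (1/2)∫|h'|^2 + P∫h satisfies E(h) ≥ E(h_P), with equality if and only if h = h_P. -/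
/-!
Integrating by parts against `h_P'` turns the energy gap into
`E(h) - E(h_P) = (1/2) ∫ |(h - h_P)'|² + ∫ (h - h_P) (P - h_P'')`.
Off `±x_P` the second derivative `h_P''` equals `P` where `|x| > x_P` and `0` where `|x| < x_P`,
so the second integrand is `0` on the former region and `P h ≥ 0` on the latter (where
`h_P = 0`). Hence `E(h) ≥ E(h_P)`, and equality forces `(h - h_P)' = 0` a.e., so `h = h_P` since
both take the value `1` at `-1`.
-/

open MeasureTheory Set Topology

lemma hasDerivAt_max_zero_sq (x : ℝ) :
    HasDerivAt (fun t : ℝ => max t 0 ^ 2) (2 * max x 0) x := by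
  have off_zero : ∀ y ≠ 0, HasDerivAt (fun t : ℝ => max t 0 ^ 2) (2 * max y 0) y := by
    intro y hy
    rcases hy.lt_or_gt with hy | hy
    · have hloc : (fun t : ℝ => max t 0 ^ 2) =ᶠ[𝓝 y] fun _ => 0 := by
        filter_upwards [Iio_mem_nhds hy] with t ht
        simp [max_eq_right (mem_Iio.1 ht).le]
      simpa [max_eq_right hy.le] using (hasDerivAt_const y (0 : ℝ)).congr_of_eventuallyEq hloc
    · have hloc : (fun t : ℝ => max t 0 ^ 2) =ᶠ[𝓝 y] fun t => t ^ 2 := by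
        filter_upwards [Ioi_mem_nhds hy] with t ht
        rw [max_eq_left (mem_Ioi.1 ht).le]
      simpa [max_eq_left hy.le] using (hasDerivAt_pow 2 y).congr_of_eventuallyEq hloc
  rcases eq_or_ne x 0 with rfl | hx
  · exact hasDerivAt_of_hasDerivAt_of_ne off_zero (by fun_prop) (by fun_prop)
  · exact off_zero x hx

lemma intervalIntegrable_of_hasDerivAt_of_intervalIntegrable_sq {f f' : ℝ → ℝ} {a b : ℝ}
    (hab : a ≤ b) (hf : ∀ x ∈ Ioo a b, HasDerivAt f (f' x) x)
    (hf' : IntervalIntegrable (fun x => f' x ^ 2) volume a b) :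
    IntervalIntegrable f' volume a b := by
  have hmeas : AEStronglyMeasurable f' (volume.restrict (Ioc a b)) := by
    rw [← Measure.restrict_congr_set Ioo_ae_eq_Ioc]
    refine (measurable_deriv f).aestronglyMeasurable.congr ?_
    filter_upwards [ae_restrict_mem measurableSet_Ioo] with x hx using (hf x hx).deriv
  rw [intervalIntegrable_iff_integrableOn_Ioc_of_le hab] at hf' ⊢
  exact ((memLp_two_iff_integrable_sq hmeas).2 hf').integrable one_le_two

lemma eqOn_zero_of_hasDerivAt_of_ae_eq_zero {f f' : ℝ → ℝ} {a b : ℝ} (hab : a ≤ b)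
    (hf : ContinuousOn f (Icc a b)) (hf' : ∀ x ∈ Ioo a b, HasDerivAt f (f' x) x)
    (hf'i : IntervalIntegrable f' volume a b) (hf'0 : f' =ᵐ[volume.restrict (Ioc a b)] 0)
    (ha : f a = 0) : EqOn f 0 (Icc a b) := by
  intro x hx
  have hsub : Icc a x ⊆ Icc a b := Icc_subset_Icc le_rfl hx.2
  have hftc := intervalIntegral.integral_eq_sub_of_hasDerivAt_of_le hx.1 (hf.mono hsub)
    (fun y hy => hf' y ⟨hy.1, hy.2.trans_le hx.2⟩)
    (hf'i.mono_set (by rwa [uIcc_of_le hx.1, uIcc_of_le hab]))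
  rw [intervalIntegral.integral_of_le hx.1, integral_eq_zero_of_ae
    (ae_restrict_of_ae_restrict_of_subset (Ioc_subset_Ioc le_rfl hx.2) hf'0), ha] at hftc
  simpa using hftc.symm

noncomputable def energy (P a b : ℝ) (h h' : ℝ → ℝ) : ℝ :=
  (1/2) * (∫ x in a..b, (h' x)^2) + P * (∫ x in a..b, h x)

section EnergyGap

variable {a b P : ℝ} {h h' v v' v'' : ℝ → ℝ} {s : Set ℝ}

lemma intervalIntegrable_energyGap (hh : ContinuousOn h (uIcc a b))
    (hh'i : IntervalIntegrable h' volume a b)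
    (hh'2 : IntervalIntegrable (fun x => h' x ^ 2) volume a b)
    (hv : ContinuousOn v (uIcc a b)) (hv'c : ContinuousOn v' (uIcc a b))
    (hv''i : IntervalIntegrable v'' volume a b) :
    IntervalIntegrable (fun x => (h' x - v' x) ^ 2 / 2 + (h x - v x) * (P - v'' x))
      volume a b := by
  have hsq : (fun x => (h' x - v' x) ^ 2) = fun x => h' x ^ 2 - 2 * (h' x * v' x) + v' x ^ 2 := by
    ext x; ring
  have hsqi : IntervalIntegrable (fun x => (h' x - v' x) ^ 2) volume a b := by
    rw [hsq]
    exact (hh'2.sub ((hh'i.mul_continuousOn hv'c).const_mul 2)).add (hv'c.pow 2).intervalIntegrable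
  exact (hsqi.div_const 2).add ((intervalIntegrable_const.sub hv''i).continuousOn_mul (hh.sub hv))

theorem energy_sub_energy_eq_integral (hab : a ≤ b)
    (hh : ContinuousOn h (Icc a b)) (hh' : ∀ x ∈ Ioo a b, HasDerivAt h (h' x) x)
    (hh'i : IntervalIntegrable h' volume a b)
    (hh'2 : IntervalIntegrable (fun x => h' x ^ 2) volume a b)
    (hv : ContinuousOn v (Icc a b)) (hv' : ∀ x ∈ Ioo a b, HasDerivAt v (v' x) x)
    (hv'c : ContinuousOn v' (Icc a b)) (hs : s.Countable)
    (hv'' : ∀ x ∈ Ioo a b \ s, HasDerivAt v' (v'' x) x)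
    (hv''i : IntervalIntegrable v'' volume a b) (ha : h a = v a) (hb : h b = v b) :
    energy P a b h h' - energy P a b v v' =
      ∫ x in a..b, ((h' x - v' x) ^ 2 / 2 + (h x - v x) * (P - v'' x)) := by
  rw [← uIcc_of_le hab] at hh hv hv'c
  have hv'i : IntervalIntegrable v' volume a b := hv'c.intervalIntegrable
  have hv'2 : IntervalIntegrable (fun x => v' x ^ 2) volume a b := (hv'c.pow 2).intervalIntegrable
  have hhi : IntervalIntegrable h volume a b := hh.intervalIntegrable
  have hvi : IntervalIntegrable v volume a b := hv.intervalIntegrable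
  have hibp_i : IntervalIntegrable (fun x => (h' x - v' x) * v' x + (h x - v x) * v'' x)
      volume a b :=
    ((hh'i.sub hv'i).mul_continuousOn hv'c).add (hv''i.continuousOn_mul (hh.sub hv))
  have hibp : ∫ x in a..b, ((h' x - v' x) * v' x + (h x - v x) * v'' x) = 0 := by
    rw [integral_eq_of_hasDerivAt_off_countable_of_le (fun x => (h x - v x) * v' x)
      (fun x => (h' x - v' x) * v' x + (h x - v x) * v'' x) hab hs
      (by rw [← uIcc_of_le hab]; exact (hh.sub hv).mul hv'c)
      (fun x hx => ((hh' x hx.1).sub (hv' x hx.1)).mul (hv'' x hx)) hibp_i, ha, hb]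
    ring
  have hdiff_i : IntervalIntegrable
      (fun x => (1/2) * (h' x ^ 2 - v' x ^ 2) + P * (h x - v x)) volume a b :=
    ((hh'2.sub hv'2).const_mul _).add ((hhi.sub hvi).const_mul _)
  calc energy P a b h h' - energy P a b v v'
      = ∫ x in a..b, ((1/2) * (h' x ^ 2 - v' x ^ 2) + P * (h x - v x)) := by
        rw [intervalIntegral.integral_add, intervalIntegral.integral_const_mul,
          intervalIntegral.integral_const_mul, intervalIntegral.integral_sub,
          intervalIntegral.integral_sub]
        · unfold energy; ring
        exacts [hhi, hvi, hh'2, hv'2, (hh'2.sub hv'2).const_mul _, (hhi.sub hvi).const_mul _]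
    _ = (∫ x in a..b, ((1/2) * (h' x ^ 2 - v' x ^ 2) + P * (h x - v x))) -
          ∫ x in a..b, ((h' x - v' x) * v' x + (h x - v x) * v'' x) := by rw [hibp, sub_zero]
    _ = _ := by
        rw [← intervalIntegral.integral_sub hdiff_i hibp_i]
        congr 1; ext x; ring

theorem energy_le_energy_and_eq_iff (hab : a ≤ b)
    (hh : ContinuousOn h (Icc a b)) (hh' : ∀ x ∈ Ioo a b, HasDerivAt h (h' x) x)
    (hh'2 : IntervalIntegrable (fun x => h' x ^ 2) volume a b)
    (hv : ContinuousOn v (Icc a b)) (hv' : ∀ x ∈ Ioo a b, HasDerivAt v (v' x) x)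
    (hv'c : ContinuousOn v' (Icc a b)) (hs : s.Countable)
    (hv'' : ∀ x ∈ Ioo a b \ s, HasDerivAt v' (v'' x) x)
    (hv''i : IntervalIntegrable v'' volume a b) (ha : h a = v a) (hb : h b = v b)
    (hrem : ∀ x ∈ Icc a b, 0 ≤ (h x - v x) * (P - v'' x)) :
    energy P a b v v' ≤ energy P a b h h' ∧
      (energy P a b h h' = energy P a b v v' ↔ EqOn h v (Icc a b)) := by
  have hh'i := intervalIntegrable_of_hasDerivAt_of_intervalIntegrable_sq hab hh' hh'2
  have hgap := energy_sub_energy_eq_integral (P := P) hab hh hh' hh'i hh'2 hv hv' hv'c hs hv''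
    hv''i ha hb
  have hgap_nonneg : ∀ x ∈ Icc a b, 0 ≤ (h' x - v' x) ^ 2 / 2 + (h x - v x) * (P - v'' x) :=
    fun x hx => add_nonneg (by positivity) (hrem x hx)
  refine ⟨sub_nonneg.1 (hgap ▸ intervalIntegral.integral_nonneg hab hgap_nonneg),
    fun heq => ?_, fun heq => ?_⟩
  · rw [← uIcc_of_le hab] at hh hv hv'c
    have hgap_ae := (intervalIntegral.integral_eq_zero_iff_of_le_of_nonneg_ae hab
      ((ae_restrict_mem measurableSet_Ioc).mono fun x hx => hgap_nonneg x (Ioc_subset_Icc_self hx))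
      (intervalIntegrable_energyGap hh hh'i hh'2 hv hv'c hv''i)).1 (by rw [← hgap, heq, sub_self])
    have hderiv_ae : (fun x => h' x - v' x) =ᵐ[volume.restrict (Ioc a b)] 0 := by
      filter_upwards [hgap_ae, ae_restrict_mem measurableSet_Ioc] with x hx hxab
      have hsq : (h' x - v' x) ^ 2 = 0 := by
        have hremx := hrem x (Ioc_subset_Icc_self hxab)
        simp only [Pi.zero_apply] at hx
        nlinarith [sq_nonneg (h' x - v' x)]
      exact pow_eq_zero_iff two_ne_zero |>.1 hsq
    intro x hx
    simpa [sub_eq_zero] using eqOn_zero_of_hasDerivAt_of_ae_eq_zero hab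
      (by rw [← uIcc_of_le hab]; exact hh.sub hv) (fun y hy => (hh' y hy).sub (hv' y hy))
      (hh'i.sub (hv'c.intervalIntegrable)) hderiv_ae (sub_eq_zero.2 ha) hx
  · have hderiv_eq : ∀ x ∈ Ioo a b, h' x = v' x := fun x hx =>
      (hh' x hx).unique ((hv' x hx).congr_of_eventuallyEq
        (heq.eventuallyEq_of_mem (Icc_mem_nhds hx.1 hx.2)))
    rw [← sub_eq_zero, hgap, intervalIntegral.integral_of_le hab, integral_Ioc_eq_integral_Ioo]
    exact setIntegral_eq_zero_of_forall_eq_zero fun x hx => by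
      simp [hderiv_eq x hx, heq (Ioo_subset_Icc_self hx)]

end EnergyGap

noncomputable def steadyState (P a x : ℝ) : ℝ := P / 2 * max (|x| - a) 0 ^ 2

noncomputable def steadyStateDeriv (P a x : ℝ) : ℝ := P * (max (x - a) 0 - max (-x - a) 0)

noncomputable def steadyStateDeriv2 (P a : ℝ) : ℝ → ℝ := {x | a < |x|}.indicator fun _ => P

section SteadyState

variable {P a : ℝ}

lemma steadyState_neg (x : ℝ) : steadyState P a (-x) = steadyState P a x := by
  simp [steadyState]

lemma steadyState_one (hP : 0 < P) : steadyState P (1 - √(2 / P)) 1 = 1 := by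
  have hsq : √(2 / P) ^ 2 = 2 / P := Real.sq_sqrt (by positivity)
  rw [steadyState, abs_one, sub_sub_cancel, max_eq_left (Real.sqrt_nonneg _), hsq]
  field_simp

lemma hasDerivAt_steadyState (ha : 0 ≤ a) (x : ℝ) :
    HasDerivAt (steadyState P a) (steadyStateDeriv P a x) x := by
  have hsplit : steadyState P a = fun y => P / 2 * (max (y - a) 0 ^ 2 + max (-y - a) 0 ^ 2) := by
    ext y
    rcases le_total 0 y with hy | hy
    · rw [steadyState, abs_of_nonneg hy, max_eq_right (a := -y - a) (by linarith)]
      ring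
    · rw [steadyState, abs_of_nonpos hy, max_eq_right (a := y - a) (by linarith)]
      ring
  have hright := (hasDerivAt_max_zero_sq (x - a)).comp x ((hasDerivAt_id x).sub_const a)
  have hleft := (hasDerivAt_max_zero_sq (-x - a)).comp x ((hasDerivAt_neg x).sub_const a)
  rw [hsplit]
  exact ((hright.add hleft).const_mul (P / 2)).congr_deriv (by rw [steadyStateDeriv]; ring)

lemma continuous_steadyStateDeriv : Continuous (steadyStateDeriv P a) := by
  unfold steadyStateDeriv; fun_prop

lemma hasDerivAt_steadyStateDeriv (ha : 0 ≤ a) {x : ℝ} (hx : |x| ≠ a) :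
    HasDerivAt (steadyStateDeriv P a) (steadyStateDeriv2 P a x) x := by
  rcases hx.lt_or_gt with hx | hx
  · have hloc : steadyStateDeriv P a =ᶠ[𝓝 x] fun _ => 0 := by
      filter_upwards [(isOpen_lt continuous_abs continuous_const).mem_nhds hx] with y hy
      rw [abs_lt] at hy
      rw [steadyStateDeriv, max_eq_right (a := y - a) (by linarith),
        max_eq_right (a := -y - a) (by linarith)]
      ring
    rw [steadyStateDeriv2, indicator_of_notMem (by simpa using hx.le)]
    exact (hasDerivAt_const x 0).congr_of_eventuallyEq hloc
  rw [steadyStateDeriv2, indicator_of_mem (by exact hx)]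
  rcases lt_abs.1 hx with hx | hx
  · have hloc : steadyStateDeriv P a =ᶠ[𝓝 x] fun y => P * (y - a) := by
      filter_upwards [Ioi_mem_nhds hx] with y hy
      rw [mem_Ioi] at hy
      rw [steadyStateDeriv, max_eq_left (a := y - a) (by linarith),
        max_eq_right (a := -y - a) (by linarith)]
      ring
    simpa using (((hasDerivAt_id x).sub_const a).const_mul P).congr_of_eventuallyEq hloc
  · have hloc : steadyStateDeriv P a =ᶠ[𝓝 x] fun y => P * (y + a) := by
      filter_upwards [Iio_mem_nhds (lt_neg_of_lt_neg hx)] with y hy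
      rw [mem_Iio] at hy
      rw [steadyStateDeriv, max_eq_right (a := y - a) (by linarith),
        max_eq_left (a := -y - a) (by linarith)]
      ring
    simpa using (((hasDerivAt_id x).add_const a).const_mul P).congr_of_eventuallyEq hloc

lemma intervalIntegrable_steadyStateDeriv2 (b c : ℝ) :
    IntervalIntegrable (steadyStateDeriv2 P a) volume b c :=
  intervalIntegrable_iff.2 <| (intervalIntegrable_iff.1 intervalIntegrable_const).indicator
    (measurableSet_lt measurable_const measurable_abs)

lemma sub_steadyState_mul_sub_steadyStateDeriv2_nonneg (hP : 0 ≤ P) {y : ℝ} (hy : 0 ≤ y)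
    (x : ℝ) : 0 ≤ (y - steadyState P a x) * (P - steadyStateDeriv2 P a x) := by
  by_cases hx : a < |x|
  · simp [steadyStateDeriv2, hx]
  · rw [not_lt] at hx
    simp [steadyState, steadyStateDeriv2, hx]
    positivity

end SteadyState

theorem stmt4 (P : ℝ) (hP : 2 < P) (h h' : ℝ → ℝ)
    (hcont : ContinuousOn h (Set.Icc (-1) 1))
    (hderiv : ∀ x ∈ Set.Icc (-1:ℝ) 1, HasDerivWithinAt h (h' x) (Set.Icc (-1) 1) x)
    (hint : IntervalIntegrable (fun x => (h' x)^2) volume (-1) 1)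
    (hnn : ∀ x ∈ Set.Icc (-1:ℝ) 1, 0 ≤ h x)
    (hbcm : h (-1) = 1) (hbcp : h 1 = 1) :
    let xP : ℝ := 1 - Real.sqrt (2/P)
    let hp : ℝ → ℝ := fun x => P/2 * (max (|x| - xP) 0)^2
    let Eh : ℝ := (1/2) * (∫ x in (-1:ℝ)..1, (h' x)^2) + P * (∫ x in (-1:ℝ)..1, h x)
    let Ep : ℝ := (1/2) * (∫ x in (-1:ℝ)..1, (deriv hp x)^2) + P * (∫ x in (-1:ℝ)..1, hp x)
    Ep ≤ Eh ∧ (Eh = Ep ↔ Set.EqOn h hp (Set.Icc (-1) 1)) := by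
  intro xP hp Eh Ep
  have hP0 : 0 < P := by linarith
  have hxP : 0 ≤ xP :=
    sub_nonneg.2 (Real.sqrt_le_one.2 ((div_le_one hP0).2 hP.le))
  have hhp : ∀ x, HasDerivAt hp (steadyStateDeriv P xP x) x := hasDerivAt_steadyState hxP
  have hEp : Ep = energy P (-1) 1 hp (steadyStateDeriv P xP) := by
    simp only [Ep, energy, fun x => (hhp x).deriv]
  rw [hEp]
  refine energy_le_energy_and_eq_iff (by norm_num) hcont
    (fun x hx => (hderiv x (Ioo_subset_Icc_self hx)).hasDerivAt (Icc_mem_nhds hx.1 hx.2)) hint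
    (fun x _ => (hhp x).continuousAt.continuousWithinAt) (fun x _ => hhp x)
    continuous_steadyStateDeriv.continuousOn ((countable_singleton xP).insert (-xP))
    (fun x hx => hasDerivAt_steadyStateDeriv hxP ?_) (intervalIntegrable_steadyStateDeriv2 _ _)
    ?_ ?_ (fun x hx => sub_steadyState_mul_sub_steadyStateDeriv2_nonneg hP0.le (hnn x hx) x)
  · rintro hx'
    rcases (abs_eq hxP).1 hx' with rfl | rfl <;> simp at hx
  · exact hbcm.trans ((steadyState_neg 1).trans (steadyState_one hP0)).symm
  · exact hbcp.trans (steadyState_one hP0).symm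
end

section
/- Let k ∈ C^2 on J = (x_0, x_0+δ) ⊂ (-1,1) with k > 0 on J, k, k', k'' right-continuous at x_0, k(x_0^+) = 0 and k'(x_0^+) ≠ 0. Let (k_n) be nonnegative H^3((-1,1)) functions with k_n(±1) = c > 0 and k_n → k in C^2 on J. Then the energy dissipation ∫_{-1}^{1} k_n |∂_x^3 k_n|^2 dx does not converge to 0. -/
/-!
Suppose the dissipation tends to zero. Just right of `x₀` the limit profile has
`k k'' - k'²/2 ≈ -k₁²/2 < 0`; fix such a point `b`. For large `n`, `kₙ` is small at `x₀` but not
at `b`, and equals `c` at `-1`, so `kₙ` has an interior local minimum `z < b`, chosen after the last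
point before `x₀` where `kₙ ≥ c/2` so that `kₙ` stays bounded on `[z, b]`. At `z` the boundary term
`kₙ kₙ'' - kₙ'²/2` is nonnegative, hence `∫_z^b kₙ kₙ''' ≤ -k₁²/4`. The weighted Cauchy–Schwarz
inequality `(∫ f g)² ≤ ∫ f · ∫ f g²` bounds the left side by a multiple of the square root of the
dissipation, a contradiction.
-/

open MeasureTheory Set Filter Topology

theorem TendstoUniformlyOn.tendsto_of_tendsto_of_mem {ι α β : Type*} [PseudoMetricSpace β]
    {F : ι → α → β} {f : α → β} {L : ι → β} {y : β} {p : Filter ι} {l : Filter α} [l.NeBot]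
    {s : Set α} (hF : TendstoUniformlyOn F f p s) (hs : s ∈ l)
    (hFL : ∀ i, Tendsto (F i) l (𝓝 (L i))) (hf : Tendsto f l (𝓝 y)) :
    Tendsto L p (𝓝 y) := by
  rw [Metric.tendsto_nhds]
  intro ε hε
  filter_upwards [Metric.tendstoUniformlyOn_iff.1 hF (ε / 2) (half_pos hε)] with i hi
  have : dist (L i) y ≤ ε / 2 := by
    refine le_of_tendsto ((hFL i).dist hf) ?_
    filter_upwards [hs] with x hx
    rw [dist_comm]
    exact (hi x hx).le
  linarith

theorem IsLocalMin.deriv_deriv_nonneg {f : ℝ → ℝ} {x : ℝ} (hmin : IsLocalMin f x)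
    (hc : ContinuousAt f x) : 0 ≤ deriv (deriv f) x := by
  by_contra! hneg
  have hmax := isLocalMax_of_deriv_deriv_neg hneg hmin.deriv_eq_zero hc
  have hconst : f =ᶠ[𝓝 x] fun _ => f x := by
    filter_upwards [hmin, hmax] with y hy₁ hy₂
    exact le_antisymm hy₂ hy₁
  have hderiv : deriv f =ᶠ[𝓝 x] fun _ => 0 := by
    simpa using hconst.deriv
  simp [hderiv.deriv_eq] at hneg

theorem exists_isLocalMin_forall_lt {f : ℝ → ℝ} {a b x₀ m : ℝ} (hf : ContinuousOn f (Icc a b))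
    (hax : a ≤ x₀) (hxb : x₀ ≤ b) (ha : m ≤ f a) (hm : f x₀ < m) (hb : f x₀ < f b) :
    ∃ z ∈ Ioo a b, IsLocalMin f z ∧ ∀ x ∈ Icc z x₀, f x < m := by
  set S := Icc a x₀ ∩ f ⁻¹' Ici m
  have hS : IsClosed S :=
    (hf.mono (Icc_subset_Icc_right hxb)).preimage_isClosed_of_isClosed isClosed_Icc isClosed_Ici
  have hSa : a ∈ S := ⟨left_mem_Icc.2 hax, ha⟩
  have hSbdd : BddAbove S := bddAbove_Icc.mono inter_subset_left
  -- `l` is the last point before `x₀` where `f ≥ m`; a minimum over `[l, b]` is interior.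
  set l := sSup S
  obtain ⟨⟨hal, hlx⟩, hfl : m ≤ f l⟩ : l ∈ S := hS.csSup_mem ⟨a, hSa⟩ hSbdd
  have hlb : l ≤ b := hlx.trans hxb
  obtain ⟨z, ⟨hlz, hzb⟩, hz⟩ := isCompact_Icc.exists_isMinOn (nonempty_Icc.2 hlb)
    (hf.mono (Icc_subset_Icc_left hal))
  have hzx₀ : f z ≤ f x₀ := hz ⟨hlx, hxb⟩
  have hlz' : l < z := lt_of_le_of_ne hlz (by rintro rfl; linarith)
  have hzb' : z < b := lt_of_le_of_ne hzb (by rintro rfl; linarith)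
  refine ⟨z, ⟨hal.trans_lt hlz', hzb'⟩, hz.isLocalMin (Icc_mem_nhds hlz' hzb'), ?_⟩
  intro x ⟨hzx, hxx₀⟩
  by_contra! hmx
  exact absurd (le_csSup hSbdd ⟨⟨hal.trans (hlz.trans hzx), hxx₀⟩, hmx⟩) (by linarith)

theorem sq_intervalIntegral_mul_le {f g : ℝ → ℝ} {a b : ℝ} (hab : a ≤ b)
    (hf₀ : ∀ x ∈ Icc a b, 0 ≤ f x) (hf : IntervalIntegrable f volume a b)
    (hfg : IntervalIntegrable (fun x => f x * g x) volume a b)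
    (hfg2 : IntervalIntegrable (fun x => f x * g x ^ 2) volume a b) :
    (∫ x in a..b, f x * g x) ^ 2 ≤ (∫ x in a..b, f x) * ∫ x in a..b, f x * g x ^ 2 := by
  have hquad : ∀ t : ℝ, 0 ≤ (∫ x in a..b, f x) * (t * t) + (-2 * ∫ x in a..b, f x * g x) * t
      + ∫ x in a..b, f x * g x ^ 2 := by
    intro t
    have hexp : ∫ x in a..b, f x * (g x - t) ^ 2 = (∫ x in a..b, f x) * (t * t)
        + (-2 * ∫ x in a..b, f x * g x) * t + ∫ x in a..b, f x * g x ^ 2 := by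
      have h : (fun x => f x * (g x - t) ^ 2)
          = fun x => ((t * t) * f x + (-2 * t) * (f x * g x)) + f x * g x ^ 2 := by
        ext x; ring
      rw [h, intervalIntegral.integral_add ((hf.const_mul _).add (hfg.const_mul _)) hfg2,
        intervalIntegral.integral_add (hf.const_mul _) (hfg.const_mul _),
        intervalIntegral.integral_const_mul, intervalIntegral.integral_const_mul]
      ring
    rw [← hexp]
    exact intervalIntegral.integral_nonneg hab fun x hx => mul_nonneg (hf₀ x hx) (sq_nonneg _)
  have := discrim_le_zero hquad
  rw [discrim] at this
  nlinarith

/-- A primitive of `f f'''`. -/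
noncomputable def boundaryTerm (f : ℝ → ℝ) (x : ℝ) : ℝ :=
  f x * iteratedDeriv 2 f x - deriv f x ^ 2 / 2

theorem hasDerivAt_boundaryTerm {f : ℝ → ℝ} (hf : ContDiff ℝ 3 f) (x : ℝ) :
    HasDerivAt (boundaryTerm f) (f x * iteratedDeriv 3 f x) x := by
  have h₁ : HasDerivAt f (deriv f x) x :=
    (hf.differentiable (by norm_num) x).hasDerivAt
  have h₂ : HasDerivAt (deriv f) (iteratedDeriv 2 f x) x := by
    have hd : Differentiable ℝ (deriv f) := by
      simpa [iteratedDeriv_one] using hf.differentiable_iteratedDeriv 1 (by norm_num)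
    rw [iteratedDeriv_succ, iteratedDeriv_one]
    exact (hd x).hasDerivAt
  have h₃ : HasDerivAt (iteratedDeriv 2 f) (iteratedDeriv 3 f x) x := by
    rw [show iteratedDeriv 3 f = deriv (iteratedDeriv 2 f) from iteratedDeriv_succ]
    exact (hf.differentiable_iteratedDeriv 2 (by norm_num) x).hasDerivAt
  exact ((h₁.mul h₃).sub ((h₂.pow 2).div_const 2)).congr_deriv (by ring)

theorem integral_mul_iteratedDeriv_three {f : ℝ → ℝ} (hf : ContDiff ℝ 3 f) (a b : ℝ) :
    ∫ x in a..b, f x * iteratedDeriv 3 f x = boundaryTerm f b - boundaryTerm f a :=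
  intervalIntegral.integral_eq_sub_of_hasDerivAt (fun x _ => hasDerivAt_boundaryTerm hf x)
    ((hf.continuous.mul (hf.continuous_iteratedDeriv 3 le_rfl)).intervalIntegrable a b)

theorem IsLocalMin.boundaryTerm_nonneg {f : ℝ → ℝ} {x : ℝ} (hmin : IsLocalMin f x)
    (hc : ContinuousAt f x) (hx : 0 ≤ f x) : 0 ≤ boundaryTerm f x := by
  rw [boundaryTerm, hmin.deriv_eq_zero, iteratedDeriv_succ, iteratedDeriv_one]
  simpa using mul_nonneg hx (hmin.deriv_deriv_nonneg hc)

theorem sq_boundaryTerm_le_of_isLocalMin {f : ℝ → ℝ} {a b B : ℝ} (hf : ContDiff ℝ 3 f)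
    (hab : a ≤ b) (hf₀ : ∀ x ∈ Icc a b, 0 ≤ f x) (hfB : ∀ x ∈ Icc a b, f x ≤ B)
    (hmin : IsLocalMin f a) (hb : boundaryTerm f b ≤ 0) :
    boundaryTerm f b ^ 2 ≤ B * (b - a) * ∫ x in a..b, f x * iteratedDeriv 3 f x ^ 2 := by
  have hc₃ := hf.continuous_iteratedDeriv 3 le_rfl
  have hidentity := integral_mul_iteratedDeriv_three hf a b
  have ha := hmin.boundaryTerm_nonneg hf.continuous.continuousAt (hf₀ a ⟨le_rfl, hab⟩)
  have hCS := sq_intervalIntegral_mul_le (g := iteratedDeriv 3 f) hab hf₀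
    (hf.continuous.intervalIntegrable a b) ((hf.continuous.mul hc₃).intervalIntegrable a b)
    ((hf.continuous.mul (hc₃.pow 2)).intervalIntegrable a b)
  have hmass : ∫ x in a..b, f x ≤ B * (b - a) := by
    simpa [mul_comm] using intervalIntegral.integral_mono_on hab
      (hf.continuous.intervalIntegrable a b) (intervalIntegrable_const (μ := volume)) hfB
  have hdiss : 0 ≤ ∫ x in a..b, f x * iteratedDeriv 3 f x ^ 2 :=
    intervalIntegral.integral_nonneg hab fun x hx => mul_nonneg (hf₀ x hx) (sq_nonneg _)
  rw [hidentity] at hCS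
  calc boundaryTerm f b ^ 2 ≤ (boundaryTerm f b - boundaryTerm f a) ^ 2 := by nlinarith
    _ ≤ _ := hCS.trans (mul_le_mul_of_nonneg_right hmass hdiss)

theorem sq_boundaryTerm_le_integral {f : ℝ → ℝ} {p q x₀ b m B : ℝ} (hf : ContDiff ℝ 3 f)
    (hpx : p ≤ x₀) (hxb : x₀ ≤ b) (hbq : b ≤ q) (hf₀ : ∀ x ∈ Icc p q, 0 ≤ f x)
    (hp : m ≤ f p) (hx₀ : f x₀ < m) (hx₀b : f x₀ < f b) (hB : ∀ x ∈ Ioc x₀ b, f x ≤ B)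
    (hb : boundaryTerm f b ≤ 0) :
    boundaryTerm f b ^ 2 ≤ max m B * (q - p) * ∫ x in p..q, f x * iteratedDeriv 3 f x ^ 2 := by
  obtain ⟨z, ⟨hpz, hzb⟩, hmin, hlt⟩ :=
    exists_isLocalMin_forall_lt hf.continuous.continuousOn hpx hxb hp hx₀ hx₀b
  have hsub : Icc z b ⊆ Icc p q := Icc_subset_Icc hpz.le hbq
  have hbound : ∀ x ∈ Icc z b, f x ≤ max m B := fun x hx => by
    rcases le_or_gt x x₀ with h | h
    · exact (hlt x ⟨hx.1, h⟩).le.trans (le_max_left _ _)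
    · exact (hB x ⟨h, hx.2⟩).trans (le_max_right _ _)
  have hdiss₀ : ∀ x ∈ Icc p q, 0 ≤ f x * iteratedDeriv 3 f x ^ 2 :=
    fun x hx => mul_nonneg (hf₀ x hx) (sq_nonneg _)
  have hdiss : ∫ x in z..b, f x * iteratedDeriv 3 f x ^ 2
      ≤ ∫ x in p..q, f x * iteratedDeriv 3 f x ^ 2 :=
    intervalIntegral.integral_mono_interval hpz.le hzb.le hbq
      ((ae_restrict_iff' measurableSet_Ioc).2 (ae_of_all _ fun x hx => hdiss₀ x ⟨hx.1.le, hx.2⟩))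
      ((hf.continuous.mul ((hf.continuous_iteratedDeriv 3 le_rfl).pow 2)).intervalIntegrable p q)
  have hmax : 0 ≤ max m B := (hf₀ z (hsub ⟨le_rfl, hzb.le⟩)).trans (hbound z ⟨le_rfl, hzb.le⟩)
  calc boundaryTerm f b ^ 2
      ≤ max m B * (b - z) * ∫ x in z..b, f x * iteratedDeriv 3 f x ^ 2 :=
        sq_boundaryTerm_le_of_isLocalMin hf hzb.le (fun x hx => hf₀ x (hsub hx)) hbound hmin hb
    _ ≤ max m B * (q - p) * ∫ x in p..q, f x * iteratedDeriv 3 f x ^ 2 :=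
        mul_le_mul (mul_le_mul_of_nonneg_left (by linarith) hmax) hdiss
          (intervalIntegral.integral_nonneg hzb.le fun x hx => hdiss₀ x (hsub hx))
          (mul_nonneg hmax (by linarith))

theorem stmt12_general (x0 δ c : ℝ) (hδ : 0 < δ) (hJ : Set.Ioo x0 (x0+δ) ⊆ Set.Ioo (-1:ℝ) 1)
    (k : ℝ → ℝ) (k1 k2 : ℝ)
    (hkpos : ∀ x ∈ Set.Ioo x0 (x0+δ), 0 < k x)
    (hk0 : Filter.Tendsto k (nhdsWithin x0 (Set.Ioi x0)) (nhds 0))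
    (hk1 : Filter.Tendsto (deriv k) (nhdsWithin x0 (Set.Ioi x0)) (nhds k1))
    (hk1ne : k1 ≠ 0)
    (hk2 : Filter.Tendsto (iteratedDeriv 2 k) (nhdsWithin x0 (Set.Ioi x0)) (nhds k2))
    (kn : ℕ → ℝ → ℝ) (hc : 0 < c)
    (hknreg : ∀ n, ContDiff ℝ 3 (kn n))
    (hknnn : ∀ n, ∀ x ∈ Set.Icc (-1:ℝ) 1, 0 ≤ kn n x)
    (hknbc : ∀ n, kn n (-1) = c ∧ kn n 1 = c)
    (hconv0 : TendstoUniformlyOn kn k Filter.atTop (Set.Ioo x0 (x0+δ)))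
    (hconv1 : TendstoUniformlyOn (fun n => deriv (kn n)) (deriv k)
      Filter.atTop (Set.Ioo x0 (x0+δ)))
    (hconv2 : TendstoUniformlyOn (fun n => iteratedDeriv 2 (kn n)) (iteratedDeriv 2 k)
      Filter.atTop (Set.Ioo x0 (x0+δ))) :
    ¬ Filter.Tendsto (fun n => ∫ x in (-1:ℝ)..1, kn n x * (iteratedDeriv 3 (kn n) x)^2)
        Filter.atTop (nhds 0) := by
  intro hD
  obtain ⟨hx0, -⟩ := (Ioo_subset_Ioo_iff (by linarith)).1 hJ
  have hJx0 : Ioo x0 (x0 + δ) ∈ 𝓝[>] x0 := Ioo_mem_nhdsGT (by linarith)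
  have hk_bdry : Tendsto (boundaryTerm k) (𝓝[>] x0) (𝓝 (0 * k2 - k1 ^ 2 / 2)) :=
    (hk0.mul hk2).sub ((hk1.pow 2).div_const 2)
  have hk1sq : 0 < k1 ^ 2 := by positivity
  obtain ⟨u, hu, hku⟩ := mem_nhdsGT_iff_exists_Ioo_subset.1 (hk0.eventually_lt_const one_pos)
  obtain ⟨b, hbJ, hbu, hkb⟩ := (Filter.Eventually.and hJx0 <| Filter.Eventually.and
    (Ioo_mem_nhdsGT hu) (hk_bdry.eventually_lt_const (by linarith : _ < -(k1 ^ 2 / 4)))).exists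
  have hkn_x0 : Tendsto (fun n => kn n x0) atTop (𝓝 0) :=
    hconv0.tendsto_of_tendsto_of_mem hJx0
      (fun n => (hknreg n).continuous.continuousAt.tendsto.mono_left nhdsWithin_le_nhds) hk0
  have hkn_bdry : Tendsto (fun n => boundaryTerm (kn n) b) atTop (𝓝 (boundaryTerm k b)) :=
    ((hconv0.tendsto_at hbJ).mul (hconv2.tendsto_at hbJ)).sub
      (((hconv1.tendsto_at hbJ).pow 2).div_const 2)
  have hlower : ∀ᶠ n in atTop, (k1 ^ 2 / 4) ^ 2
      ≤ max (c / 2) 2 * (1 - -1) * ∫ x in (-1:ℝ)..1, kn n x * iteratedDeriv 3 (kn n) x ^ 2 := by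
    filter_upwards [Metric.tendstoUniformlyOn_iff.1 hconv0 1 one_pos,
      hkn_x0.eventually_lt_const (half_pos hc),
      hkn_x0.eventually_lt (hconv0.tendsto_at hbJ) (hkpos b hbJ),
      hkn_bdry.eventually_lt_const hkb] with n hclose hx0c hx0b hbn
    have hB : ∀ x ∈ Ioc x0 b, kn n x ≤ 2 := fun x hx => by
      have hx1 := hclose x ⟨hx.1, hx.2.trans_lt hbJ.2⟩
      have hx2 : k x < 1 := hku ⟨hx.1, hx.2.trans_lt hbu.2⟩
      rw [Real.dist_eq, abs_lt] at hx1
      linarith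
    calc (k1 ^ 2 / 4) ^ 2 ≤ boundaryTerm (kn n) b ^ 2 := by nlinarith
      _ ≤ _ := sq_boundaryTerm_le_integral (hknreg n) hx0 hbJ.1.le (hJ hbJ).2.le (hknnn n)
        (by rw [(hknbc n).1]; linarith) hx0c hx0b hB (by linarith)
  have := ge_of_tendsto (hD.const_mul _) hlower
  rw [mul_zero] at this
  nlinarith

theorem stmt12 (x0 δ c : ℝ) (hδ : 0 < δ) (hJ : Set.Ioo x0 (x0+δ) ⊆ Set.Ioo (-1:ℝ) 1)
    (k : ℝ → ℝ) (k1 k2 : ℝ)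
    (hk : ContDiffOn ℝ 2 k (Set.Ioo x0 (x0+δ)))
    (hkpos : ∀ x ∈ Set.Ioo x0 (x0+δ), 0 < k x)
    (hk0 : Filter.Tendsto k (nhdsWithin x0 (Set.Ioi x0)) (nhds 0))
    (hk1 : Filter.Tendsto (deriv k) (nhdsWithin x0 (Set.Ioi x0)) (nhds k1))
    (hk1ne : k1 ≠ 0)
    (hk2 : Filter.Tendsto (iteratedDeriv 2 k) (nhdsWithin x0 (Set.Ioi x0)) (nhds k2))
    (kn : ℕ → ℝ → ℝ) (hc : 0 < c)
    (hknreg : ∀ n, ContDiff ℝ 3 (kn n))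
    (hknnn : ∀ n, ∀ x ∈ Set.Icc (-1:ℝ) 1, 0 ≤ kn n x)
    (hknbc : ∀ n, kn n (-1) = c ∧ kn n 1 = c)
    (hconv0 : TendstoUniformlyOn kn k Filter.atTop (Set.Ioo x0 (x0+δ)))
    (hconv1 : TendstoUniformlyOn (fun n => deriv (kn n)) (deriv k)
      Filter.atTop (Set.Ioo x0 (x0+δ)))
    (hconv2 : TendstoUniformlyOn (fun n => iteratedDeriv 2 (kn n)) (iteratedDeriv 2 k)
      Filter.atTop (Set.Ioo x0 (x0+δ))) :
    ¬ Filter.Tendsto (fun n => ∫ x in (-1:ℝ)..1, kn n x * (iteratedDeriv 3 (kn n) x)^2)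
        Filter.atTop (nhds 0) :=
  stmt12_general x0 δ c hδ hJ k k1 k2 hkpos hk0 hk1 hk1ne hk2 kn hc hknreg hknnn hknbc hconv0 hconv1
    hconv2
end
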